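/- Define A(x) = 8(π-2)²(π³-60π+120)x⁸ - 6(π-2)(π⁶-100π⁴+200π³-480(π-2)²)x⁶ + 3π³(π⁶-720(π-2)²)x⁴ + 540π⁶(π-2)x² - 45π⁹ and B(x) = 90x³(π³-4(π-2)x²)³. Then g₁(x) := 2A(x)·sin³x + B(x)·cos x > 0 for all x in (0, c], where c = -((π³-60(π-2))π³)/(240(π³-24(π-2))). -/

import Mathlib

/-!
On `(0, c]` we have `A < 0 < B`, so replacing `sin x` by its Taylor upper bound of degree 5
and `cos x` by its Taylor lower bound of degree 6 can only decrease `g₁`. For the resulting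
polynomial all terms below `x⁹` cancel identically in `π`, leaving `x⁹ Q(π, x)`. Bounding the
coefficients of `Q(π, ·)` (and of `-A(π, ·)`) as polynomials in `x²` from below, by constants that
are nonpositive beyond the constant term, reduces positivity on `(0, c]` to a numerical check at
`x = 1.35 ≥ c`.
-/

open Real

theorem nonneg_of_hasDerivAt_nonneg {f f' : ℝ → ℝ} (hf : ∀ y, HasDerivAt f (f' y) y)
    (hf' : ∀ y, 0 ≤ y → 0 ≤ f' y) (h₀ : f 0 = 0) {x : ℝ} (hx : 0 ≤ x) : 0 ≤ f x := by
  have hmono : MonotoneOn f (Set.Ici 0) :=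
    monotoneOn_of_hasDerivWithinAt_nonneg (convex_Ici 0)
      (fun y _ ↦ (hf y).continuousAt.continuousWithinAt) (fun y _ ↦ (hf y).hasDerivWithinAt)
      (fun y hy ↦ hf' y (interior_subset hy))
  simpa [h₀] using hmono Set.self_mem_Ici hx hx

theorem cos_le_sub_sq_add_pow_four {x : ℝ} (hx : 0 ≤ x) :
    cos x ≤ 1 - x ^ 2 / 2 + x ^ 4 / 24 := by
  have hderiv (y : ℝ) : HasDerivAt (fun y ↦ 1 - y ^ 2 / 2 + y ^ 4 / 24 - cos y)
      (sin y - (y - y ^ 3 / 6)) y := by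
    refine (((hasDerivAt_const y 1).sub ((hasDerivAt_pow 2 y).div_const 2)).add
      ((hasDerivAt_pow 4 y).div_const 24)).sub (hasDerivAt_cos y) |>.congr_deriv ?_
    push_cast; ring
  have := nonneg_of_hasDerivAt_nonneg hderiv (fun y hy ↦ sub_nonneg.2 (sin_ge_sub_cube hy))
    (by simp) hx
  linarith

theorem sin_le_sub_cube_add_pow_five {x : ℝ} (hx : 0 ≤ x) :
    sin x ≤ x - x ^ 3 / 6 + x ^ 5 / 120 := by
  have hderiv (y : ℝ) : HasDerivAt (fun y ↦ y - y ^ 3 / 6 + y ^ 5 / 120 - sin y)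
      (1 - y ^ 2 / 2 + y ^ 4 / 24 - cos y) y := by
    refine (((hasDerivAt_id y).sub ((hasDerivAt_pow 3 y).div_const 6)).add
      ((hasDerivAt_pow 5 y).div_const 120)).sub (hasDerivAt_sin y) |>.congr_deriv ?_
    push_cast; ring
  have := nonneg_of_hasDerivAt_nonneg hderiv
    (fun y hy ↦ sub_nonneg.2 (cos_le_sub_sq_add_pow_four hy)) (by simp) hx
  linarith

theorem sub_sq_add_pow_four_sub_pow_six_le_cos {x : ℝ} (hx : 0 ≤ x) :
    1 - x ^ 2 / 2 + x ^ 4 / 24 - x ^ 6 / 720 ≤ cos x := by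
  have hderiv (y : ℝ) : HasDerivAt (fun y ↦ cos y - (1 - y ^ 2 / 2 + y ^ 4 / 24 - y ^ 6 / 720))
      (y - y ^ 3 / 6 + y ^ 5 / 120 - sin y) y := by
    refine (hasDerivAt_cos y).sub ((((hasDerivAt_const y 1).sub
      ((hasDerivAt_pow 2 y).div_const 2)).add ((hasDerivAt_pow 4 y).div_const 24)).sub
      ((hasDerivAt_pow 6 y).div_const 720)) |>.congr_deriv ?_
    push_cast; ring
  have := nonneg_of_hasDerivAt_nonneg hderiv
    (fun y hy ↦ sub_nonneg.2 (sin_le_sub_cube_add_pow_five hy)) (by simp) hx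
  linarith

theorem sum_mul_pow_pos_of_le_coeff {n : ℕ} {c m : Fin n → ℝ} (hmc : ∀ k, m k ≤ c k)
    (hm : ∀ k : Fin n, (k : ℕ) ≠ 0 → m k ≤ 0) {t r : ℝ} (ht : 0 ≤ t) (htr : t ≤ r)
    (hr : 0 < ∑ k, m k * r ^ (k : ℕ)) : 0 < ∑ k, c k * t ^ (k : ℕ) :=
  calc 0 < ∑ k, m k * r ^ (k : ℕ) := hr
    _ ≤ ∑ k, m k * t ^ (k : ℕ) := by
      refine Finset.sum_le_sum fun k _ ↦ ?_
      rcases eq_or_ne (k : ℕ) 0 with hk | hk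
      · simp [hk]
      · exact mul_le_mul_of_nonpos_left (pow_le_pow_left₀ ht htr _) (hm k hk)
    _ ≤ ∑ k, c k * t ^ (k : ℕ) :=
      Finset.sum_le_sum fun k _ ↦ mul_le_mul_of_nonneg_right (hmc k) (pow_nonneg ht _)

theorem pi_pow_bounds (n : ℕ) (hn : n ≠ 0) : 3.141592 ^ n < π ^ n ∧ π ^ n < 3.141593 ^ n :=
  ⟨pow_lt_pow_left₀ pi_gt_d6 (by norm_num) hn, pow_lt_pow_left₀ pi_lt_d6 pi_pos.le hn⟩

namespace Nishizawa

def A (p x : ℝ) : ℝ :=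
  8 * (p - 2) ^ 2 * (p ^ 3 - 60 * p + 120) * x ^ 8 -
    6 * (p - 2) * (p ^ 6 - 100 * p ^ 4 + 200 * p ^ 3 - 480 * (p - 2) ^ 2) * x ^ 6 +
    3 * p ^ 3 * (p ^ 6 - 720 * (p - 2) ^ 2) * x ^ 4 + 540 * p ^ 6 * (p - 2) * x ^ 2 - 45 * p ^ 9

def B (p x : ℝ) : ℝ := 90 * x ^ 3 * (p ^ 3 - 4 * (p - 2) * x ^ 2) ^ 3

noncomputable def c : ℝ := -((π ^ 3 - 60 * (π - 2)) * π ^ 3) / (240 * (π ^ 3 - 24 * (π - 2)))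

def negACoeff (p : ℝ) : Fin 5 → ℝ :=
  ![45 * p ^ 9, -540 * p ^ 6 * (p - 2), -3 * p ^ 3 * (p ^ 6 - 720 * (p - 2) ^ 2),
    6 * (p - 2) * (p ^ 6 - 100 * p ^ 4 + 200 * p ^ 3 - 480 * (p - 2) ^ 2),
    -8 * (p - 2) ^ 2 * (p ^ 3 - 60 * p + 120)]

theorem neg_A_eq (p x : ℝ) : -A p x = ∑ k, negACoeff p k * (x ^ 2) ^ (k : ℕ) := by
  simp [A, negACoeff, Fin.sum_univ_succ]
  ring

noncomputable def qCoeff (p : ℝ) : Fin 8 → ℝ :=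
  ![4800 * p ^ 3 - 4800 * p ^ 4 + 1200 * p ^ 5 - 120 * p ^ 6 + 60 * p ^ 7 - 47 / 24 * p ^ 9,
    7680 - 11520 * p + 5760 * p ^ 2 - 4448 * p ^ 3 + 3488 * p ^ 4 - 872 * p ^ 5 + 13 * p ^ 6 -
      13 / 2 * p ^ 7 + 91 / 160 * p ^ 9,
    -6912 + 10368 * p - 5184 * p ^ 2 + 1552 * p ^ 3 - 688 * p ^ 4 + 172 * p ^ 5 +
      13 / 20 * p ^ 6 - 13 / 40 * p ^ 7 - 43 / 576 * p ^ 9,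
    4096 / 3 - 2048 * p + 1024 * p ^ 2 - 2174 / 9 * p ^ 3 + 638 / 9 * p ^ 4 -
      319 / 18 * p ^ 5 - 17 / 72 * p ^ 6 + 17 / 144 * p ^ 7 + 103 / 19200 * p ^ 9,
    -6352 / 45 + 3176 / 15 * p - 1588 / 15 * p ^ 2 + 2936 / 135 * p ^ 3 - 554 / 135 * p ^ 4 +
      277 / 270 * p ^ 5 + 49 / 2400 * p ^ 6 - 49 / 4800 * p ^ 7 - 1 / 4800 * p ^ 9,
    128 / 15 - 64 / 5 * p + 32 / 5 * p ^ 2 - 1067 / 900 * p ^ 3 + 107 / 900 * p ^ 4 -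
      107 / 3600 * p ^ 5 - 1 / 1200 * p ^ 6 + 1 / 2400 * p ^ 7 + 1 / 288000 * p ^ 9,
    -22 / 75 + 11 / 25 * p - 11 / 50 * p ^ 2 + 67 / 1800 * p ^ 3 - 1 / 1800 * p ^ 4 +
      1 / 7200 * p ^ 5 + 1 / 72000 * p ^ 6 - 1 / 144000 * p ^ 7,
    1 / 225 - 1 / 150 * p + 1 / 300 * p ^ 2 - 7 / 13500 * p ^ 3 - 1 / 27000 * p ^ 4 +
      1 / 108000 * p ^ 5]

noncomputable def Q (p x : ℝ) : ℝ := ∑ k, qCoeff p k * (x ^ 2) ^ (k : ℕ)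

theorem A_mul_sin_taylor_add_B_mul_cos_taylor (p x : ℝ) :
    2 * A p x * (x - x ^ 3 / 6 + x ^ 5 / 120) ^ 3 +
      B p x * (1 - x ^ 2 / 2 + x ^ 4 / 24 - x ^ 6 / 720) = x ^ 9 * Q p x := by
  simp [A, B, Q, qCoeff, Fin.sum_univ_succ]
  ring

theorem A_pi_neg {x : ℝ} (hx : x ^ 2 ≤ 1.35 ^ 2) : A π x < 0 := by
  have hcoeff : ∀ k, ![1340000, -593000, -3000, -22000, 0] k ≤ negACoeff π k := by
    intro k
    fin_cases k <;> simp [negACoeff] <;>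
      linarith [pi_gt_d6, pi_lt_d6, pi_pow_bounds 2 (by norm_num), pi_pow_bounds 3 (by norm_num),
        pi_pow_bounds 4 (by norm_num), pi_pow_bounds 5 (by norm_num), pi_pow_bounds 6 (by norm_num),
        pi_pow_bounds 7 (by norm_num), pi_pow_bounds 9 (by norm_num)]
  have := sum_mul_pow_pos_of_le_coeff hcoeff (by norm_num [Fin.forall_fin_succ]) (sq_nonneg x) hx
    (by norm_num [Fin.sum_univ_succ])
  linarith [neg_A_eq π x]

theorem B_pi_pos {x : ℝ} (hx : 0 < x) (hx₂ : x ^ 2 ≤ 1.35 ^ 2) : 0 < B π x := by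
  have : 0 < π ^ 3 - 4 * (π - 2) * x ^ 2 := by
    nlinarith [pi_gt_d6, pi_lt_d6, pi_pow_bounds 3 (by norm_num)]
  unfold B
  positivity

theorem Q_pi_pos {x : ℝ} (hx : x ^ 2 ≤ 1.35 ^ 2) : 0 < Q π x := by
  have hcoeff : ∀ k, ![55000, -27000, 0, -700, 0, -3, 0, -1 / 1000] k ≤ qCoeff π k := by
    intro k
    fin_cases k <;> simp [qCoeff] <;>
      linarith [pi_gt_d6, pi_lt_d6, pi_pow_bounds 2 (by norm_num), pi_pow_bounds 3 (by norm_num),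
        pi_pow_bounds 4 (by norm_num), pi_pow_bounds 5 (by norm_num), pi_pow_bounds 6 (by norm_num),
        pi_pow_bounds 7 (by norm_num), pi_pow_bounds 9 (by norm_num)]
  exact sum_mul_pow_pos_of_le_coeff hcoeff (by norm_num [Fin.forall_fin_succ]) (sq_nonneg x) hx
    (by norm_num [Fin.sum_univ_succ])

theorem c_le : c ≤ 1.35 := by
  rw [c, div_le_iff₀ (by linarith [pi_lt_d6, pi_pow_bounds 3 (by norm_num)])]
  linarith [pi_gt_d6, pi_lt_d6, pi_pow_bounds 3 (by norm_num), pi_pow_bounds 4 (by norm_num),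
    pi_pow_bounds 6 (by norm_num)]

end Nishizawa

theorem g1_pos (x : ℝ) (hx : 0 < x)
    (hx' : x ≤ -((π ^ 3 - 60 * (π - 2)) * π ^ 3) / (240 * (π ^ 3 - 24 * (π - 2)))) :
    2 * (8 * (π - 2) ^ 2 * (π ^ 3 - 60 * π + 120) * x ^ 8 -
          6 * (π - 2) * (π ^ 6 - 100 * π ^ 4 + 200 * π ^ 3 - 480 * (π - 2) ^ 2) * x ^ 6 +
          3 * π ^ 3 * (π ^ 6 - 720 * (π - 2) ^ 2) * x ^ 4 +
          540 * π ^ 6 * (π - 2) * x ^ 2 - 45 * π ^ 9) * Real.sin x ^ 3 +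
      90 * x ^ 3 * (π ^ 3 - 4 * (π - 2) * x ^ 2) ^ 3 * Real.cos x > 0 := by
  have hx₂ : x ^ 2 ≤ 1.35 ^ 2 := pow_le_pow_left₀ hx.le (hx'.trans Nishizawa.c_le) 2
  have hsin : 0 < sin x := sin_pos_of_pos_of_lt_pi hx (by nlinarith [pi_gt_three])
  show 0 < 2 * Nishizawa.A π x * sin x ^ 3 + Nishizawa.B π x * cos x
  calc 0 < x ^ 9 * Nishizawa.Q π x := mul_pos (pow_pos hx 9) (Nishizawa.Q_pi_pos hx₂)
    _ = 2 * Nishizawa.A π x * (x - x ^ 3 / 6 + x ^ 5 / 120) ^ 3 +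
          Nishizawa.B π x * (1 - x ^ 2 / 2 + x ^ 4 / 24 - x ^ 6 / 720) :=
      (Nishizawa.A_mul_sin_taylor_add_B_mul_cos_taylor π x).symm
    _ ≤ 2 * Nishizawa.A π x * sin x ^ 3 + Nishizawa.B π x * cos x := by
      gcongr ?_ + ?_
      · exact mul_le_mul_of_nonpos_left
          (pow_le_pow_left₀ hsin.le (sin_le_sub_cube_add_pow_five hx.le) 3)
          (by linarith [Nishizawa.A_pi_neg hx₂])
      · exact mul_le_mul_of_nonneg_left (sub_sq_add_pow_four_sub_pow_six_le_cos hx.le)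
          (Nishizawa.B_pi_pos hx hx₂).le
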